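/- arXiv:1302.2386 — 2 statements merged into one kernel-verified Lean document; each statement's English description precedes it below -/
import Mathlib

section
/- A subspace V of ℝ^n is (A,B)-invariant (i.e., A·V ⊆ V + Im(B)) if and only if there exists a linear feedback map K : ℝ^n → ℝ^r such that (A + B·K)·V ⊆ V. -/
/-!
If `f v ∈ V + range g` for every `v ∈ V`, pick `u` with `f v + g u ∈ V` for each vector `v` of a
basis of `V`; the resulting linear map on `V`, extended to the whole space, is the feedback `k`.
Conversely, `f v = (f + g ∘ k) v + g (-k v)`.
-/

namespace Submodule

section Ring

variable {R M U : Type*} [Ring R] [AddCommGroup M] [Module R M] [AddCommGroup U] [Module R U]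
  {V : Submodule R M} {f : M →ₗ[R] M} {g : U →ₗ[R] M}

theorem map_le_sup_range_of_map_add_comp_le (k : M →ₗ[R] U) (hk : V.map (f + g ∘ₗ k) ≤ V) :
    V.map f ≤ V ⊔ LinearMap.range g := by
  rintro _ ⟨v, hv, rfl⟩
  have hfv : f v = (f + g ∘ₗ k) v + g (-k v) := by simp
  rw [hfv]
  exact add_mem_sup (hk ⟨v, hv, rfl⟩) ⟨-k v, rfl⟩

end Ring

section Field

variable {K M U : Type*} [Field K] [AddCommGroup M] [Module K M] [AddCommGroup U] [Module K U]
  {V : Submodule K M} {f : M →ₗ[K] M} {g : U →ₗ[K] M}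

theorem exists_map_add_comp_le_of_map_le_sup_range (h : V.map f ≤ V ⊔ LinearMap.range g) :
    ∃ k : M →ₗ[K] U, V.map (f + g ∘ₗ k) ≤ V := by
  have correction : ∀ v : V, ∃ u, f v + g u ∈ V := by
    intro v
    obtain ⟨y, hy, _, ⟨u, rfl⟩, hyu⟩ := mem_sup.1 (h ⟨v, v.2, rfl⟩)
    refine ⟨-u, ?_⟩
    rwa [map_neg, ← hyu, add_neg_cancel_right]
  let b := Module.Basis.ofVectorSpace K V
  choose u hu using fun i => correction (b i)
  obtain ⟨k, hk⟩ := LinearMap.exists_extend (b.constr K u)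
  have hquot : V.mkQ ∘ₗ (f + g ∘ₗ k) ∘ₗ V.subtype = 0 := by
    refine b.ext fun i => ?_
    have hki : k (b i) = u i := by simpa using LinearMap.congr_fun hk (b i)
    simpa [hki] using (Quotient.mk_eq_zero V).2 (hu i)
  refine ⟨k, ?_⟩
  rintro _ ⟨v, hv, rfl⟩
  exact (Quotient.mk_eq_zero V).1 (LinearMap.congr_fun hquot ⟨v, hv⟩)

theorem map_le_sup_range_iff_exists_map_add_comp_le :
    V.map f ≤ V ⊔ LinearMap.range g ↔ ∃ k : M →ₗ[K] U, V.map (f + g ∘ₗ k) ≤ V :=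
  ⟨exists_map_add_comp_le_of_map_le_sup_range,
    fun ⟨k, hk⟩ => map_le_sup_range_of_map_add_comp_le k hk⟩

end Field

end Submodule

/-- A subspace `V` of `ℝ^n` is `(A,B)`-invariant (`A·V ⊆ V + Im B`)
iff there is a feedback `K` with `(A + B·K)·V ⊆ V`. -/
theorem stmt0 {n r : ℕ} (A : Matrix (Fin n) (Fin n) ℝ) (B : Matrix (Fin n) (Fin r) ℝ)
    (V : Submodule ℝ (Fin n → ℝ)) :
    V.map A.mulVecLin ≤ V ⊔ LinearMap.range B.mulVecLin ↔
      ∃ K : Matrix (Fin r) (Fin n) ℝ, V.map (A + B * K).mulVecLin ≤ V := by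
  simp only [Submodule.map_le_sup_range_iff_exists_map_add_comp_le, Matrix.mulVecLin_add,
    Matrix.mulVecLin_mul]
  constructor
  · rintro ⟨k, hk⟩
    refine ⟨LinearMap.toMatrix' k, ?_⟩
    rwa [← Matrix.toLin'_apply' (LinearMap.toMatrix' k), Matrix.toLin'_toMatrix']
  · rintro ⟨K, hK⟩
    exact ⟨K.mulVecLin, hK⟩
end

section
/- For any subspace F ⊆ ℝ^n, there exists a unique supremal (A,B)-invariant subspace V* contained in F; that is, V* is (A,B)-invariant, V* ⊆ F, and every (A,B)-invariant subspace W ⊆ F satisfies W ⊆ V*. -/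
namespace Submodule

variable {R M : Type*} [Semiring R] [AddCommMonoid M] [Module R M]

/-- `f V ⊆ V + U`; for `f = A` and `U = Im B` these are the `(A,B)`-invariant subspaces. -/
def IsControlledInvariant (f : M →ₗ[R] M) (U V : Submodule R M) : Prop :=
  V.map f ≤ V ⊔ U

theorem IsControlledInvariant.sSup {f : M →ₗ[R] M} {U : Submodule R M} {S : Set (Submodule R M)}
    (h : ∀ V ∈ S, IsControlledInvariant f U V) : IsControlledInvariant f U (sSup S) := by
  rw [IsControlledInvariant, map_le_iff_le_comap, sSup_le_iff]
  intro V hV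
  rw [← map_le_iff_le_comap]
  exact (h V hV).trans (sup_le_sup_right (le_sSup hV) U)

def supControlledInvariant (f : M →ₗ[R] M) (U F : Submodule R M) : Submodule R M :=
  sSup {V | IsControlledInvariant f U V ∧ V ≤ F}

theorem isGreatest_supControlledInvariant (f : M →ₗ[R] M) (U F : Submodule R M) :
    IsGreatest {V | IsControlledInvariant f U V ∧ V ≤ F} (supControlledInvariant f U F) :=
  ⟨⟨IsControlledInvariant.sSup fun _ hV => hV.1, sSup_le fun _ hV => hV.2⟩,
    fun _ hV => le_sSup hV⟩

end Submodule

open Submodule in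
/-- every subspace `F ⊆ ℝ^n` contains a unique supremal `(A,B)`-invariant
subspace `V*`: `V*` is `(A,B)`-invariant, contained in `F`, and contains every
`(A,B)`-invariant subspace contained in `F`. -/
theorem stmt3 {n r : ℕ} (A : Matrix (Fin n) (Fin n) ℝ) (B : Matrix (Fin n) (Fin r) ℝ)
    (F : Submodule ℝ (Fin n → ℝ)) :
    ∃! Vstar : Submodule ℝ (Fin n → ℝ),
      Vstar.map A.mulVecLin ≤ Vstar ⊔ LinearMap.range B.mulVecLin ∧ Vstar ≤ F ∧
        ∀ W : Submodule ℝ (Fin n → ℝ),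
          W.map A.mulVecLin ≤ W ⊔ LinearMap.range B.mulVecLin → W ≤ F → W ≤ Vstar := by
  obtain ⟨⟨hinv, hle⟩, hmax⟩ :=
    isGreatest_supControlledInvariant A.mulVecLin (LinearMap.range B.mulVecLin) F
  refine ⟨_, ⟨hinv, hle, fun W hW hWF => hmax ⟨hW, hWF⟩⟩, ?_⟩
  rintro V ⟨hV, hVF, hVmax⟩
  exact le_antisymm (hmax ⟨hV, hVF⟩) (hVmax _ hinv hle)
end
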